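/- arXiv:1303.3184 — 2 statements merged into one kernel-verified Lean document; each statement's English description precedes it below -/
import Mathlib

section
/- Let f : U → ℝ be C^k on an open set U ⊆ ℝ^d containing X₀, with all derivatives of f at X₀ of orders 1 through k−1 vanishing, and suppose the k-th order Taylor homogeneous polynomial P_k of f at X₀ is strictly positive on the unit sphere. Then f has a strict local minimum at X₀. -/
/-!
Compactness of the unit sphere gives `m > 0` with `D^k f(x₀)[v, …, v] ≥ m ‖v‖^k`, and by continuity
of `D^k f` the form `D^k f(y)[v, …, v]` stays positive for `v ≠ 0` and `y` near `x₀`. Along the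
segment from `x₀` to a nearby `x`, the functions `ψ_j t = D^j f(x₀ + t (x - x₀))[x - x₀, …]` satisfy
`ψ_j' = ψ_{j+1}` and `ψ_j 0 = 0` for `1 ≤ j < k`; since `ψ_k > 0`, downward induction makes
every `ψ_j` with `j ≥ 1` positive on `(0, 1)`, so `ψ_0`, which is `f` along the segment, is
strictly increasing.
-/

open Set Metric Filter Topology

section HigherDerivativeTest

variable {E : Type*} [NormedAddCommGroup E] [NormedSpace ℝ E]

theorem ContinuousMultilinearMap.map_diag_smul {k : ℕ}
    (T : ContinuousMultilinearMap ℝ (fun _ : Fin k => E) ℝ) (c : ℝ) (v : E) :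
    T (fun _ => c • v) = c ^ k * T (fun _ => v) := by
  simpa [Finset.prod_const, smul_eq_mul] using T.map_smul_univ (fun _ => c) (fun _ => v)

theorem ContinuousMultilinearMap.exists_pos_mul_norm_pow_le [ProperSpace E] {k : ℕ} (hk : k ≠ 0)
    (T : ContinuousMultilinearMap ℝ (fun _ : Fin k => E) ℝ)
    (hT : ∀ v : E, ‖v‖ = 1 → 0 < T (fun _ => v)) :
    ∃ m > 0, ∀ v : E, m * ‖v‖ ^ k ≤ T (fun _ => v) := by
  have hzero : ∀ m : ℝ, m * ‖(0 : E)‖ ^ k ≤ T (fun _ => 0) := fun m => by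
    rw [T.map_coord_zero ⟨0, Nat.pos_of_ne_zero hk⟩ rfl, norm_zero, zero_pow hk, mul_zero]
  rcases subsingleton_or_nontrivial E with hE | hE
  · exact ⟨1, one_pos, fun v => Subsingleton.elim 0 v ▸ hzero 1⟩
  have hcont : Continuous fun v : E => T (fun _ => v) :=
    T.cont.comp (continuous_pi fun _ => continuous_id)
  obtain ⟨v₀, hv₀, hmin⟩ := (isCompact_sphere (0 : E) 1).exists_isMinOn
    (NormedSpace.sphere_nonempty.2 zero_le_one) hcont.continuousOn
  refine ⟨T (fun _ => v₀), hT v₀ (by simpa using hv₀), fun v => ?_⟩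
  rcases eq_or_ne v 0 with rfl | hv
  · exact hzero _
  have hunit : ‖v‖⁻¹ • v ∈ sphere (0 : E) 1 := by simp [norm_smul, hv]
  calc T (fun _ => v₀) * ‖v‖ ^ k ≤ T (fun _ => ‖v‖⁻¹ • v) * ‖v‖ ^ k := by
        gcongr; exact hmin hunit
    _ = T (fun _ => v) := by
        rw [T.map_diag_smul, mul_comm, ← mul_assoc, ← mul_pow,
          mul_inv_cancel₀ (norm_ne_zero_iff.2 hv), one_pow, one_mul]

theorem ContinuousMultilinearMap.pos_of_norm_sub_lt {k : ℕ}
    {S T : ContinuousMultilinearMap ℝ (fun _ : Fin k => E) ℝ} {m : ℝ} {v : E} (hv : v ≠ 0)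
    (hT : m * ‖v‖ ^ k ≤ T (fun _ => v)) (hST : ‖S - T‖ < m) : 0 < S (fun _ => v) := by
  have hdiff : |S (fun _ => v) - T (fun _ => v)| ≤ ‖S - T‖ * ‖v‖ ^ k := by
    simpa [Finset.prod_const, Real.norm_eq_abs] using (S - T).le_opNorm (fun _ => v)
  have hgap : 0 < (m - ‖S - T‖) * ‖v‖ ^ k :=
    mul_pos (sub_pos.2 hST) (pow_pos (norm_pos_iff.2 hv) k)
  linarith [(abs_le.1 hdiff).1]

theorem hasDerivAt_iteratedFDerivWithin_apply_line {F : Type*} [NormedAddCommGroup F]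
    [NormedSpace ℝ F] {f : E → F} {U : Set E} {n : WithTop ℕ∞} (hf : ContDiffOn ℝ n f U)
    (hU : IsOpen U) {j : ℕ} (hj : (j : WithTop ℕ∞) < n) {x v : E} {t : ℝ} (hx : x + t • v ∈ U) :
    HasDerivAt (fun s : ℝ => iteratedFDerivWithin ℝ j f U (x + s • v) (fun _ => v))
      (iteratedFDerivWithin ℝ (j + 1) f U (x + t • v) (fun _ => v)) t := by
  have hdiff : DifferentiableAt ℝ (iteratedFDerivWithin ℝ j f U) (x + t • v) :=
    (hf.differentiableOn_iteratedFDerivWithin hj hU.uniqueDiffOn _ hx).differentiableAt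
      (hU.mem_nhds hx)
  have hline : HasDerivAt (fun s : ℝ => x + s • v) v t := by
    simpa using ((hasDerivAt_id t).smul_const v).const_add x
  convert (hdiff.hasFDerivAt.continuousMultilinear_apply_const (fun _ => v)).comp_hasDerivAt t
    hline using 1
  · rfl
  rw [iteratedFDerivWithin_succ_apply_left, fderivWithin_of_isOpen hU hx]
  rfl

theorem strictMonoOn_of_hasDerivAt_chain {ψ : ℕ → ℝ → ℝ} {k : ℕ} {a b : ℝ} (hk : k ≠ 0)
    (hderiv : ∀ j < k, ∀ t ∈ Icc a b, HasDerivAt (ψ j) (ψ (j + 1) t) t)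
    (hzero : ∀ j, 1 ≤ j → j < k → ψ j a = 0) (hpos : ∀ t ∈ Ioo a b, 0 < ψ k t) :
    StrictMonoOn (ψ 0) (Icc a b) := by
  have hmono : ∀ j < k, (∀ t ∈ Ioo a b, 0 < ψ (j + 1) t) → StrictMonoOn (ψ j) (Icc a b) :=
    fun j hj hpos' => strictMonoOn_of_hasDerivWithinAt_pos (convex_Icc a b)
      (fun t ht => (hderiv j hj t ht).continuousAt.continuousWithinAt)
      (fun t ht => (hderiv j hj t (interior_subset ht)).hasDerivWithinAt)
      (by rwa [interior_Icc])
  have hposj : ∀ j, j ≤ k → 1 ≤ j → ∀ t ∈ Ioo a b, 0 < ψ j t := by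
    refine fun j hjk => Nat.decreasingInduction
      (motive := fun j _ => 1 ≤ j → ∀ t ∈ Ioo a b, 0 < ψ j t) (fun j hj ih hj1 t ht => ?_)
      (fun _ => hpos) hjk
    have hab : a ≤ b := ht.1.le.trans ht.2.le
    simpa [hzero j hj1 hj] using
      hmono j hj (ih (by omega)) (left_mem_Icc.2 hab) (Ioo_subset_Icc_self ht) ht.1
  exact hmono 0 (Nat.pos_of_ne_zero hk) (hposj 1 (Nat.one_le_iff_ne_zero.2 hk) le_rfl)

theorem lt_of_iteratedFDerivWithin_pos_on_segment {f : E → ℝ} {U : Set E} {k : ℕ} (hk : k ≠ 0)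
    (hU : IsOpen U) (hf : ContDiffOn ℝ k f U) {x y : E} (hseg : segment ℝ x y ⊆ U)
    (hders : ∀ j : ℕ, 1 ≤ j → j < k → iteratedFDerivWithin ℝ j f U x = 0)
    (hpos : ∀ z ∈ openSegment ℝ x y, 0 < iteratedFDerivWithin ℝ k f U z (fun _ => y - x)) :
    f x < f y := by
  set ψ : ℕ → ℝ → ℝ := fun j t => iteratedFDerivWithin ℝ j f U (x + t • (y - x)) (fun _ => y - x)
  have hmem : ∀ t ∈ Icc (0 : ℝ) 1, x + t • (y - x) ∈ U := fun t ht =>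
    hseg (segment_eq_image' ℝ x y ▸ mem_image_of_mem _ ht)
  have hmono : StrictMonoOn (ψ 0) (Icc 0 1) :=
    strictMonoOn_of_hasDerivAt_chain hk
      (fun j hj t ht => hasDerivAt_iteratedFDerivWithin_apply_line hf hU
        (by exact_mod_cast hj) (hmem t ht))
      (fun j hj1 hjk => by simp [ψ, hders j hj1 hjk])
      (fun t ht => hpos _ (openSegment_eq_image' ℝ x y ▸ mem_image_of_mem _ ht))
  simpa [ψ] using hmono (left_mem_Icc.2 zero_le_one) (right_mem_Icc.2 zero_le_one) zero_lt_one

theorem eventually_nhdsNE_lt_of_iteratedFDerivWithin_pos [ProperSpace E] {f : E → ℝ}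
    {U : Set E} {x₀ : E} {k : ℕ} (hk : k ≠ 0) (hU : IsOpen U) (hx₀ : x₀ ∈ U)
    (hf : ContDiffOn ℝ k f U)
    (hders : ∀ j : ℕ, 1 ≤ j → j < k → iteratedFDerivWithin ℝ j f U x₀ = 0)
    (hpos : ∀ v : E, ‖v‖ = 1 → 0 < iteratedFDerivWithin ℝ k f U x₀ (fun _ => v)) :
    ∀ᶠ x in 𝓝[≠] x₀, f x₀ < f x := by
  set T := iteratedFDerivWithin ℝ k f U x₀
  obtain ⟨m, hm, hcoer⟩ := T.exists_pos_mul_norm_pow_le hk hpos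
  have hcont : ContinuousAt (iteratedFDerivWithin ℝ k f U) x₀ :=
    (hf.continuousOn_iteratedFDerivWithin le_rfl hU.uniqueDiffOn).continuousAt (hU.mem_nhds hx₀)
  have hnear : ∀ᶠ z in 𝓝 x₀, z ∈ U ∧ ‖iteratedFDerivWithin ℝ k f U z - T‖ < m :=
    (hU.eventually_mem hx₀).and <|
      (hcont.eventually (ball_mem_nhds T hm)).mono fun z hz => by rwa [← dist_eq_norm]
  obtain ⟨ε, hε, hball⟩ := Metric.eventually_nhds_iff_ball.1 hnear
  filter_upwards [nhdsWithin_le_nhds (ball_mem_nhds x₀ hε), self_mem_nhdsWithin] with x hx hne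
  have hseg : segment ℝ x₀ x ⊆ ball x₀ ε := (convex_ball x₀ ε).segment_subset (mem_ball_self hε) hx
  refine lt_of_iteratedFDerivWithin_pos_on_segment hk hU hf (hseg.trans fun z hz => (hball z hz).1)
    hders fun z hz => ?_
  exact ContinuousMultilinearMap.pos_of_norm_sub_lt (sub_ne_zero.2 hne) (hcoer _)
    (hball z (hseg (openSegment_subset_segment ℝ _ _ hz))).2

end HigherDerivativeTest

theorem stmt_6 (d k : ℕ) (hk : 2 ≤ k) (U : Set (EuclideanSpace ℝ (Fin d)))
    (hU : IsOpen U) (X₀ : EuclideanSpace ℝ (Fin d)) (hX₀ : X₀ ∈ U)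
    (f : EuclideanSpace ℝ (Fin d) → ℝ) (hf : ContDiffOn ℝ k f U)
    (hders : ∀ j : ℕ, 1 ≤ j → j < k → iteratedFDerivWithin ℝ j f U X₀ = 0)
    (hpos : ∀ V : EuclideanSpace ℝ (Fin d), ‖V‖ = 1 →
      0 < (1 / (k.factorial : ℝ)) * iteratedFDerivWithin ℝ k f U X₀ (fun _ => V)) :
    ∃ ε > 0, ∀ X : EuclideanSpace ℝ (Fin d), ‖X - X₀‖ < ε → X ≠ X₀ → f X₀ < f X := by
  have hposD : ∀ V : EuclideanSpace ℝ (Fin d), ‖V‖ = 1 →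
      0 < iteratedFDerivWithin ℝ k f U X₀ (fun _ => V) :=
    fun V hV => pos_of_mul_pos_right (hpos V hV) (by positivity)
  obtain ⟨ε, hε, hmin⟩ := Metric.eventually_nhds_iff.1 <| eventually_nhdsWithin_iff.1 <|
    eventually_nhdsNE_lt_of_iteratedFDerivWithin_pos (by omega) hU hX₀ hf hders hposD
  exact ⟨ε, hε, fun X hX hne => hmin (by rwa [dist_eq_norm]) hne⟩
end

section
/- Let f : U → ℝ be C^{k+1} on an open set U ⊆ ℝ^d containing X₀ with all derivatives of orders 1 through k−1 vanishing at X₀, where k is odd and the k-th Taylor homogeneous polynomial P_k of f at X₀ is not identically zero. Then X₀ is a saddle point of f. -/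
/-!
Along the line `t ↦ X₀ + t • V`, the vanishing of the lower derivatives reduces Peano's form of
Taylor's theorem to `f (X₀ + t • V) = f X₀ + P_k(V) t ^ k + o(t ^ k)`. As `k` is odd, `t ^ k`
changes sign at `0`, so `f` takes values on both sides of `f X₀` arbitrarily close to `X₀`.
-/

open Set Filter
open scoped Topology Pointwise

theorem iteratedDerivWithin_comp_add_smul {𝕜 E F : Type*} [NontriviallyNormedField 𝕜]
    [NormedAddCommGroup E] [NormedSpace 𝕜 E] [NormedAddCommGroup F] [NormedSpace 𝕜 F]
    {f : E → F} {U : Set E} {n : WithTop ℕ∞}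
    (hf : ContDiffOn 𝕜 n f U) (hU : IsOpen U) (x v : E) {i : ℕ} (hi : i ≤ n) {t : 𝕜}
    (ht : x + t • v ∈ U) :
    iteratedDerivWithin i (fun t : 𝕜 => f (x + t • v)) ((fun t : 𝕜 => x + t • v) ⁻¹' U) t =
      iteratedFDerivWithin 𝕜 i f U (x + t • v) (fun _ => v) := by
  set U₀ : Set E := (x + ·) ⁻¹' U
  have hU₀ : IsOpen U₀ := hU.preimage (continuous_const_add x)
  have hf₀ : ContDiffOn 𝕜 n (fun y => f (x + y)) U₀ :=
    hf.comp (contDiff_const.add contDiff_id).contDiffOn (mapsTo_preimage _ _)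
  have hshift : x +ᵥ U₀ = U := image_preimage_eq U (add_left_surjective x)
  let L : 𝕜 →L[𝕜] E := (ContinuousLinearMap.id 𝕜 𝕜).smulRight v
  have hL := L.iteratedFDerivWithin_comp_right hf₀ hU₀.uniqueDiffOn
    (hU₀.preimage L.continuous).uniqueDiffOn ht hi
  exact congr($hL fun _ => 1).trans (by simp [L, iteratedFDerivWithin_comp_add_left, hshift])

theorem frequently_pos_of_isLittleO {α : Type*} {l : Filter α} {φ ψ : α → ℝ}
    (h : (fun t => φ t - ψ t) =o[l] ψ) (hψ : ∃ᶠ t in l, 0 < ψ t) : ∃ᶠ t in l, 0 < φ t := by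
  refine (hψ.and_eventually (h.bound one_half_pos)).mono fun t ⟨hpos, hle⟩ => ?_
  rw [Real.norm_eq_abs, Real.norm_eq_abs, abs_of_pos hpos] at hle
  linarith [neg_abs_le (φ t - ψ t)]

theorem frequently_pos_and_frequently_neg_const_mul_pow_sub {c x₀ : ℝ} (hc : c ≠ 0) {n : ℕ}
    (hn : Odd n) :
    (∃ᶠ t in 𝓝 x₀, 0 < c * (t - x₀) ^ n) ∧ ∃ᶠ t in 𝓝 x₀, c * (t - x₀) ^ n < 0 := by
  have hright : ∃ᶠ t in 𝓝 x₀, 0 < (t - x₀) ^ n :=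
    (eventually_nhdsWithin_of_forall (s := Ioi x₀) fun t ht => pow_pos (sub_pos.2 ht) n).frequently
      |>.filter_mono nhdsWithin_le_nhds
  have hleft : ∃ᶠ t in 𝓝 x₀, (t - x₀) ^ n < 0 :=
    (eventually_nhdsWithin_of_forall (s := Iio x₀) fun t ht => hn.pow_neg (sub_neg.2 ht)).frequently
      |>.filter_mono nhdsWithin_le_nhds
  rcases hc.lt_or_gt with hc | hc
  · exact ⟨hleft.mono fun _ => mul_pos_of_neg_of_neg hc,
      hright.mono fun _ => mul_neg_of_neg_of_pos hc⟩
  · exact ⟨hright.mono fun _ => mul_pos hc, hleft.mono fun _ => mul_neg_of_pos_of_neg hc⟩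

theorem taylorWithinEval_eq_of_iteratedDerivWithin_eq_zero {E : Type*} [NormedAddCommGroup E]
    [NormedSpace ℝ E] {f : ℝ → E} {n : ℕ} (hn : n ≠ 0) {s : Set ℝ} {x₀ : ℝ}
    (hvan : ∀ j, 1 ≤ j → j < n → iteratedDerivWithin j f s x₀ = 0) (x : ℝ) :
    taylorWithinEval f n s x₀ x =
      f x₀ + ((n.factorial : ℝ)⁻¹ * (x - x₀) ^ n) • iteratedDerivWithin n f s x₀ := by
  rw [taylor_within_apply, Finset.sum_range_succ, Finset.sum_eq_single 0]
  · simp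
  · intro j hj hj0
    rw [hvan j (Nat.one_le_iff_ne_zero.mpr hj0) (Finset.mem_range.mp hj), smul_zero]
  · simp [Nat.pos_of_ne_zero hn]

theorem frequently_lt_and_frequently_gt_of_odd {g : ℝ → ℝ} {s : Set ℝ} {x₀ : ℝ} {n : ℕ}
    (hs : s ∈ 𝓝 x₀) (hg : ContDiffOn ℝ n g s) (hn : Odd n)
    (hvan : ∀ j, 1 ≤ j → j < n → iteratedDerivWithin j g s x₀ = 0)
    (hne : iteratedDerivWithin n g s x₀ ≠ 0) :
    (∃ᶠ t in 𝓝 x₀, g t < g x₀) ∧ ∃ᶠ t in 𝓝 x₀, g x₀ < g t := by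
  obtain ⟨r, hr, hball⟩ := Metric.mem_nhds_iff.mp hs
  have hB : Metric.ball x₀ r ∈ 𝓝 x₀ := Metric.ball_mem_nhds x₀ hr
  have hderiv (j : ℕ) : iteratedDerivWithin j g (Metric.ball x₀ r) x₀ =
      iteratedDerivWithin j g s x₀ := by
    simp only [iteratedDerivWithin]
    rw [iteratedFDerivWithin_congr_set
      (eventuallyEq_set.mpr (eventually_of_mem hB fun y hy => ⟨fun _ => hball hy, fun _ => hy⟩))]
  set c := (n.factorial : ℝ)⁻¹ * iteratedDerivWithin n g s x₀
  have hc : c ≠ 0 := mul_ne_zero (by positivity) hne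
  have htaylor : (fun t => (g t - g x₀) - c * (t - x₀) ^ n) =o[𝓝 x₀]
      fun t => c * (t - x₀) ^ n := by
    have := taylor_isLittleO (convex_ball x₀ r) (Metric.mem_ball_self hr) (hg.mono hball)
    rw [nhdsWithin_eq_nhds.mpr hB] at this
    refine (this.congr_left fun t => ?_).const_mul_right hc
    rw [taylorWithinEval_eq_of_iteratedDerivWithin_eq_zero hn.pos.ne'
      (by simpa [hderiv] using hvan), hderiv, smul_eq_mul]
    ring
  obtain ⟨hpos, hneg⟩ := frequently_pos_and_frequently_neg_const_mul_pow_sub (x₀ := x₀) hc hn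
  refine ⟨?_, (frequently_pos_of_isLittleO htaylor hpos).mono fun _ => sub_pos.1⟩
  have htaylor' : (fun t => -(g t - g x₀) - -(c * (t - x₀) ^ n)) =o[𝓝 x₀]
      fun t => -(c * (t - x₀) ^ n) :=
    htaylor.neg_left.neg_right.congr_left fun t => by ring
  exact (frequently_pos_of_isLittleO htaylor' (hneg.mono fun _ => neg_pos.2)).mono
    fun _ h => by linarith

theorem frequently_lt_and_frequently_gt_of_odd_iteratedFDerivWithin {E : Type*}
    [NormedAddCommGroup E] [NormedSpace ℝ E] {f : E → ℝ} {U : Set E} {x v : E} {n : ℕ}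
    (hU : IsOpen U) (hx : x ∈ U) (hf : ContDiffOn ℝ n f U) (hn : Odd n)
    (hvan : ∀ j, 1 ≤ j → j < n → iteratedFDerivWithin ℝ j f U x = 0)
    (hne : iteratedFDerivWithin ℝ n f U x (fun _ => v) ≠ 0) :
    (∃ᶠ y in 𝓝 x, f y < f x) ∧ ∃ᶠ y in 𝓝 x, f x < f y := by
  set line : ℝ → E := fun t => x + t • v
  have hline : ContDiff ℝ n line := by fun_prop
  have hline0 : line 0 = x := by simp [line]
  have hs : line ⁻¹' U ∈ 𝓝 0 :=
    hline.continuous.continuousAt.preimage_mem_nhds (hline0 ▸ hU.mem_nhds hx)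
  have hderiv (j : ℕ) (hj : j ≤ n) :
      iteratedDerivWithin j (fun t => f (line t)) (line ⁻¹' U) 0 =
        iteratedFDerivWithin ℝ j f U x (fun _ => v) := by
    simpa [line] using
      iteratedDerivWithin_comp_add_smul hf hU x v (t := 0) (mod_cast hj) (by simpa using hx)
  obtain ⟨hlt, hgt⟩ := frequently_lt_and_frequently_gt_of_odd (g := fun t => f (line t)) hs
    (hf.comp hline.contDiffOn (mapsTo_preimage _ _)) hn
    (fun j h1 h2 => by rw [hderiv j h2.le, hvan j h1 h2]; rfl) (by rwa [hderiv n le_rfl])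
  have htendsto : Tendsto line (𝓝 0) (𝓝 x) := hline0 ▸ hline.continuous.tendsto 0
  rw [hline0] at hlt hgt
  exact ⟨htendsto.frequently hlt, htendsto.frequently hgt⟩

theorem stmt_8_general (d k : ℕ) (hkodd : Odd k)
    (U : Set (EuclideanSpace ℝ (Fin d))) (hU : IsOpen U)
    (X₀ : EuclideanSpace ℝ (Fin d)) (hX₀ : X₀ ∈ U)
    (f : EuclideanSpace ℝ (Fin d) → ℝ) (hf : ContDiffOn ℝ (k + 1) f U)
    (hders : ∀ j : ℕ, 1 ≤ j → j < k → iteratedFDerivWithin ℝ j f U X₀ = 0)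
    (hne : ∃ V : EuclideanSpace ℝ (Fin d),
      (1 / (k.factorial : ℝ)) * iteratedFDerivWithin ℝ k f U X₀ (fun _ => V) ≠ 0) :
    ∀ ε > 0, ∃ Y Z : EuclideanSpace ℝ (Fin d),
      ‖Y - X₀‖ < ε ∧ ‖Z - X₀‖ < ε ∧ f Y < f X₀ ∧ f X₀ < f Z := by
  obtain ⟨V, hV⟩ := hne
  obtain ⟨hlt, hgt⟩ := frequently_lt_and_frequently_gt_of_odd_iteratedFDerivWithin hU hX₀
    (hf.of_le (mod_cast k.le_succ)) hkodd hders (right_ne_zero_of_mul hV)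
  intro ε hε
  obtain ⟨Y, hY, hYε⟩ := (hlt.and_eventually (Metric.ball_mem_nhds X₀ hε)).exists
  obtain ⟨Z, hZ, hZε⟩ := (hgt.and_eventually (Metric.ball_mem_nhds X₀ hε)).exists
  exact ⟨Y, Z, mem_ball_iff_norm.mp hYε, mem_ball_iff_norm.mp hZε, hY, hZ⟩

theorem stmt_8 (d k : ℕ) (hk1 : 1 ≤ k) (hkodd : Odd k)
    (U : Set (EuclideanSpace ℝ (Fin d))) (hU : IsOpen U)
    (X₀ : EuclideanSpace ℝ (Fin d)) (hX₀ : X₀ ∈ U)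
    (f : EuclideanSpace ℝ (Fin d) → ℝ) (hf : ContDiffOn ℝ (k + 1) f U)
    (hders : ∀ j : ℕ, 1 ≤ j → j < k → iteratedFDerivWithin ℝ j f U X₀ = 0)
    (hne : ∃ V : EuclideanSpace ℝ (Fin d),
      (1 / (k.factorial : ℝ)) * iteratedFDerivWithin ℝ k f U X₀ (fun _ => V) ≠ 0) :
    ∀ ε > 0, ∃ Y Z : EuclideanSpace ℝ (Fin d),
      ‖Y - X₀‖ < ε ∧ ‖Z - X₀‖ < ε ∧ f Y < f X₀ ∧ f X₀ < f Z :=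
  stmt_8_general d k hkodd U hU X₀ hX₀ f hf hders hne
end
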